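/- arXiv:0909.4013 — 4 statements merged into one kernel-verified Lean document; each statement's English description precedes it below -/
import Mathlib

section
/- McCarthy's 91 function: define M : ℤ → ℤ recursively by M(n) = n - 10 if n > 100, and M(n) = M(M(n+11)) otherwise. Then for all n ≤ 100, M(n) = 91, and for all n > 100, M(n) = n - 10. -/
/-!
Downward induction on `n ≤ 100`. For `90 ≤ n ≤ 100` the inner call gives
`M (n + 11) = n + 1`, which is either `101` (so `M 101 = 91`) or again in `[91, 100]`. For `n < 90`
both `n + 11` and `91` lie strictly above `n`, so the induction hypothesis evaluates both calls to `91`.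
-/

section McCarthy91

variable {M : ℤ → ℤ} (hM : ∀ n : ℤ, M n = if n > 100 then n - 10 else M (M (n + 11)))
include hM

theorem mcCarthy91_of_gt {n : ℤ} (hn : n > 100) : M n = n - 10 := by
  rw [hM n, if_pos hn]

theorem mcCarthy91_unfold_of_le {n : ℤ} (hn : n ≤ 100) : M n = M (M (n + 11)) := by
  rw [hM n, if_neg (not_lt.mpr hn)]

theorem mcCarthy91_of_le {n : ℤ} (hn : n ≤ 100) : M n = 91 := by
  rw [mcCarthy91_unfold_of_le hM hn]
  by_cases hn90 : 90 ≤ n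
  · have hinner : M (n + 11) = n + 1 := by
      rw [mcCarthy91_of_gt hM (by omega)]
      ring
    rw [hinner]
    rcases eq_or_lt_of_le hn with rfl | hlt
    · rw [mcCarthy91_of_gt hM (by norm_num)]
      norm_num
    · exact mcCarthy91_of_le (by omega)
  · rw [mcCarthy91_of_le (n := n + 11) (by omega), mcCarthy91_of_le (n := 91) (by norm_num)]
termination_by (101 - n).toNat
decreasing_by all_goals omega

end McCarthy91

/-- McCarthy's 91 function: any function satisfying the recursion equals 91
below 101 and n - 10 above 100. -/
theorem stmt_5 (M : ℤ → ℤ)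
    (hM : ∀ n : ℤ, M n = if n > 100 then n - 10 else M (M (n + 11))) :
    (∀ n : ℤ, n ≤ 100 → M n = 91) ∧ (∀ n : ℤ, n > 100 → M n = n - 10) :=
  ⟨fun _ => mcCarthy91_of_le hM, fun _ => mcCarthy91_of_gt hM⟩
end

section
/- Consider the transition on ℝ² rotating by 45 degrees: (x, y) ↦ ((x - y)/√2, (x + y)/√2), with initial states {(x, 0) : -1 ≤ x ≤ 1}. No bounded rectangle is an inductive invariant: if a product of closed bounded intervals I × J ⊆ ℝ² contains the initial states and is stable under the rotation (i.e., (x,y) ∈ I × J implies ((x-y)/√2, (x+y)/√2) ∈ I × J), then a contradiction follows; hence the only product of intervals (allowing infinite endpoints) that is an inductive invariant is ℝ × ℝ. -/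
/-! Two steps of the 45° rotation give the quarter turn `(x, y) ↦ (-y, x)`, so an invariant
rectangle `I × J` has `I = J` symmetric about `0`. The rotation maps the diagonal point `(y, y)`
to `(0, √2 y)`, so `J` is stable under multiplication by `√2 > 1`; being an interval containing
`1`, it is all of `ℝ`. -/

open Set

theorem Set.OrdConnected.eq_univ_of_neg_mem_of_mul_mem {α : Type*} [Ring α] [LinearOrder α]
    [IsStrictOrderedRing α] [Archimedean α] {S : Set α} (hS : S.OrdConnected) {c : α}
    (hc : 1 < c) (h1 : 1 ∈ S) (hneg : ∀ x ∈ S, -x ∈ S) (hmul : ∀ x ∈ S, c * x ∈ S) :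
    S = univ := by
  have hpow : ∀ n : ℕ, c ^ n ∈ S := fun n => by
    induction n with
    | zero => simpa using h1
    | succ n ih => simpa [pow_succ'] using hmul _ ih
  refine eq_univ_of_forall fun t => ?_
  obtain ⟨n, hn⟩ := pow_unbounded_of_one_lt |t| hc
  exact hS.out (hneg _ (hpow n)) (hpow n) (abs_le.mp hn.le)

noncomputable def rot45 (p : ℝ × ℝ) : ℝ × ℝ :=
  ((p.1 - p.2) / √2, (p.1 + p.2) / √2)

theorem rot45_rot45 (p : ℝ × ℝ) : rot45 (rot45 p) = (-p.2, p.1) := by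
  have hs0 : √2 ≠ 0 := by positivity
  simp only [rot45, Prod.mk.injEq]
  constructor <;> field_simp <;> rw [Real.sq_sqrt zero_le_two] <;> ring

theorem rot45_diag (y : ℝ) : rot45 (y, y) = (0, √2 * y) := by
  have hs0 : √2 ≠ 0 := by positivity
  simp only [rot45, sub_self, zero_div, Prod.mk.injEq, true_and]
  field_simp
  rw [Real.sq_sqrt zero_le_two]
  ring

theorem prod_eq_univ_of_mapsTo_rot45 {I J : Set ℝ} (hJ : J.OrdConnected)
    (h0 : ((0 : ℝ), (0 : ℝ)) ∈ I ×ˢ J) (h1 : ((1 : ℝ), (0 : ℝ)) ∈ I ×ˢ J)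
    (h : MapsTo rot45 (I ×ˢ J) (I ×ˢ J)) : I ×ˢ J = univ := by
  have hquarter : ∀ x ∈ I, ∀ y ∈ J, -y ∈ I ∧ x ∈ J := fun x hx y hy => by
    simpa [rot45_rot45] using (h.comp h) (mk_mem_prod hx hy)
  have hneg : ∀ y ∈ J, -y ∈ J := fun y hy =>
    (hquarter _ (hquarter _ h0.1 _ hy).1 _ h0.2).2
  have hJI : ∀ y ∈ J, y ∈ I := fun y hy => by
    simpa using (hquarter _ h0.1 _ (hneg y hy)).1
  have hmul : ∀ y ∈ J, √2 * y ∈ J := fun y hy => by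
    simpa [rot45_diag] using (h (mk_mem_prod (hJI y hy) hy)).2
  have hJuniv : J = univ := hJ.eq_univ_of_neg_mem_of_mul_mem
    Real.one_lt_sqrt_two (hquarter _ h1.1 _ h0.2).2 hneg hmul
  have hIuniv : I = univ := eq_univ_of_forall fun x => hJI x (hJuniv ▸ mem_univ x)
  rw [hIuniv, hJuniv, univ_prod_univ]

/-- Rotation by 45°: no bounded rectangle is an inductive invariant containing
the initial segment, and the only closed interval product that is one is ℝ × ℝ. -/
theorem stmt_8 (f : ℝ × ℝ → ℝ × ℝ)
    (hf : ∀ p : ℝ × ℝ, f p = ((p.1 - p.2) / Real.sqrt 2, (p.1 + p.2) / Real.sqrt 2)) :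
    (∀ a b c d : ℝ,
      (∀ x : ℝ, x ∈ Set.Icc (-1:ℝ) 1 → ((x, (0:ℝ)) ∈ Set.Icc a b ×ˢ Set.Icc c d)) →
      (∀ p : ℝ × ℝ, p ∈ Set.Icc a b ×ˢ Set.Icc c d → f p ∈ Set.Icc a b ×ˢ Set.Icc c d) →
      False) ∧
    (∀ I J : Set ℝ, IsClosed I → IsClosed J → I.OrdConnected → J.OrdConnected →
      (∀ x : ℝ, x ∈ Set.Icc (-1:ℝ) 1 → ((x, (0:ℝ)) ∈ I ×ˢ J)) →
      (∀ p : ℝ × ℝ, p ∈ I ×ˢ J → f p ∈ I ×ˢ J) →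
      I ×ˢ J = Set.univ) := by
  obtain rfl : f = rot45 := funext hf
  have hinvariant : ∀ I J : Set ℝ, J.OrdConnected →
      (∀ x : ℝ, x ∈ Icc (-1:ℝ) 1 → ((x, (0:ℝ)) ∈ I ×ˢ J)) →
      MapsTo rot45 (I ×ˢ J) (I ×ˢ J) → I ×ˢ J = univ := fun I J hJ hinit hstep =>
    prod_eq_univ_of_mapsTo_rot45 hJ (hinit 0 (by norm_num)) (hinit 1 (by norm_num)) hstep
  refine ⟨fun a b c d hinit hstep => ?_, fun I J _ _ _ hJ => hinvariant I J hJ⟩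
  have hIcc : Icc a b = univ := (prod_eq_univ.mp (hinvariant _ _ ordConnected_Icc hinit hstep)).1
  exact not_bddAbove_univ (hIcc ▸ bddAbove_Icc)
end

section
/- The formula ∃ l u : ℝ, (l ≤ 0 ∧ 0 ≤ u) ∧ ∀ i : ℝ, (l ≤ i ∧ i ≤ u) → (i ≥ m + 1 ∨ (l ≤ i + a ∧ i + a ≤ u)) is equivalent to a ≥ 0 ∨ m ≤ -1. -/
/-!
If `a < 0` and `m > -1`, the left endpoint `l ≤ 0 < m + 1` of any candidate invariant still passes
the guard, and its successor `l + a` leaves the interval. Conversely, `[0, max 0 (m + 1 + a)]` is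
invariant when `a ≥ 0`, and `[0, 0]` is invariant when `m ≤ -1` since then the loop never runs.
-/

/-- `[l, u]` is preserved by one iteration of `while (i ≤ m) i = i + a`, with the guard relaxed so
that the loop may exit as soon as `i ≥ m + 1`. -/
def IsLoopInvariant (a m l u : ℝ) : Prop :=
  ∀ i : ℝ, (l ≤ i ∧ i ≤ u) → (i ≥ m + 1 ∨ (l ≤ i + a ∧ i + a ≤ u))

lemma isLoopInvariant_of_nonneg {a : ℝ} (m : ℝ) (ha : 0 ≤ a) :
    IsLoopInvariant a m 0 (max 0 (m + 1 + a)) := by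
  rintro i ⟨h0i, hiu⟩
  by_cases hi : i ≥ m + 1
  · exact Or.inl hi
  · exact Or.inr ⟨by linarith, le_max_of_le_right (by linarith)⟩

lemma isLoopInvariant_zero_zero (a : ℝ) {m : ℝ} (hm : m ≤ -1) : IsLoopInvariant a m 0 0 :=
  fun _ ⟨h0i, hi0⟩ => Or.inl (by linarith)

lemma nonneg_or_le_neg_one_of_isLoopInvariant {a m l u : ℝ} (hl : l ≤ 0) (hlu : l ≤ u)
    (hinv : IsLoopInvariant a m l u) : a ≥ 0 ∨ m ≤ -1 := by
  by_contra! h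
  rcases hinv l ⟨le_rfl, hlu⟩ with hexit | ⟨hstep, -⟩ <;> linarith

/-- Existence of a finite inductive interval invariant for the loop
`i = 0; while (i ≤ m) i = i + a` is equivalent to a ≥ 0 ∨ m ≤ -1. -/
theorem stmt_9 (a m : ℝ) :
    (∃ l u : ℝ, (l ≤ 0 ∧ 0 ≤ u) ∧
      ∀ i : ℝ, (l ≤ i ∧ i ≤ u) → (i ≥ m + 1 ∨ (l ≤ i + a ∧ i + a ≤ u)))
    ↔ (a ≥ 0 ∨ m ≤ -1) := by
  constructor
  · rintro ⟨l, u, ⟨hl, hu⟩, hinv⟩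
    exact nonneg_or_le_neg_one_of_isLoopInvariant hl (hl.trans hu) hinv
  · rintro (ha | hm)
    · exact ⟨0, _, ⟨le_rfl, le_max_left _ _⟩, isLoopInvariant_of_nonneg m ha⟩
    · exact ⟨0, 0, ⟨le_rfl, le_rfl⟩, isLoopInvariant_zero_zero a hm⟩
end

section
/- Rate limiter invariant: let e1min ≤ e1max, e3min ≤ e3max, e2min ≤ e2max with e2min ≥ 0 be real bounds. Define the transition on s ∈ ℝ: given inputs e1 ∈ [e1min, e1max], e2 ∈ [e2min, e2max], e3 ∈ [e3min, e3max], the new value s' is either e3, or s - e2 if e1 - s < -e2, or s + e2 if e1 - s > e2, or e1 otherwise. Then the interval [min(e1min, e3min), max(e1max, e3max)] is an inductive invariant: if s lies in this interval, then so does s' for all admissible inputs. -/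
open Set

section RateLimiter

variable {α : Type*} [AddCommGroup α] [LinearOrder α] [IsOrderedAddMonoid α]

/-- One step `s ↦ s'` of a rate limiter with target `e1`, rate bound `e2` and reset value `e3`:
either a reset to `e3`, or `e1` clamped to `[s - e2, s + e2]`. -/
def IsRateLimiterStep (s e1 e2 e3 s' : α) : Prop :=
  s' = e3 ∨
    (e1 - s < -e2 ∧ s' = s - e2) ∨
    (e1 - s > e2 ∧ s' = s + e2) ∨
    (-e2 ≤ e1 - s ∧ e1 - s ≤ e2 ∧ s' = e1)

/-- The clamped value always lies between the previous value `s` and the target `e1`. -/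
theorem IsRateLimiterStep.mem_Icc {a b s e1 e2 e3 s' : α}
    (hstep : IsRateLimiterStep s e1 e2 e3 s') (he2 : 0 ≤ e2)
    (hs : s ∈ Icc a b) (he1 : e1 ∈ Icc a b) (he3 : e3 ∈ Icc a b) : s' ∈ Icc a b := by
  rcases hstep with rfl | ⟨hlt, rfl⟩ | ⟨hgt, rfl⟩ | ⟨-, -, rfl⟩
  · exact he3
  · have : e1 < s - e2 := by rwa [sub_lt_iff_lt_add, neg_add_eq_sub] at hlt
    exact ⟨he1.1.trans this.le, (sub_le_self s he2).trans hs.2⟩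
  · have : s + e2 < e1 := by rwa [gt_iff_lt, lt_sub_iff_add_lt'] at hgt
    exact ⟨hs.1.trans (le_add_of_nonneg_right he2), this.le.trans he1.2⟩
  · exact he1

end RateLimiter

theorem stmt_11_general (e1min e1max e2min e2max e3min e3max : ℝ)
    (h2pos : 0 ≤ e2min) :
    ∀ s e1 e2 e3 s' : ℝ,
      e1min ≤ e1 → e1 ≤ e1max →
      e2min ≤ e2 → e2 ≤ e2max →
      e3min ≤ e3 → e3 ≤ e3max →
      min e1min e3min ≤ s → s ≤ max e1max e3max →
      (s' = e3 ∨
       (e1 - s < -e2 ∧ s' = s - e2) ∨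
       (e1 - s > e2 ∧ s' = s + e2) ∨
       (-e2 ≤ e1 - s ∧ e1 - s ≤ e2 ∧ s' = e1)) →
      min e1min e3min ≤ s' ∧ s' ≤ max e1max e3max := by
  intro s e1 e2 e3 s' he1min he1max he2min _ he3min he3max hsmin hsmax hstep
  have he1 : e1 ∈ Icc (min e1min e3min) (max e1max e3max) :=
    ⟨min_le_of_left_le he1min, le_max_of_le_left he1max⟩
  have he3 : e3 ∈ Icc (min e1min e3min) (max e1max e3max) :=
    ⟨min_le_of_right_le he3min, le_max_of_le_right he3max⟩
  exact IsRateLimiterStep.mem_Icc hstep (h2pos.trans he2min) ⟨hsmin, hsmax⟩ he1 he3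

/-- The rate limiter: [min(e1min, e3min), max(e1max, e3max)] is an inductive
invariant. -/
theorem stmt_11 (e1min e1max e2min e2max e3min e3max : ℝ)
    (h1 : e1min ≤ e1max) (h2 : e2min ≤ e2max) (h3 : e3min ≤ e3max)
    (h2pos : 0 ≤ e2min) :
    ∀ s e1 e2 e3 s' : ℝ,
      e1min ≤ e1 → e1 ≤ e1max →
      e2min ≤ e2 → e2 ≤ e2max →
      e3min ≤ e3 → e3 ≤ e3max →
      min e1min e3min ≤ s → s ≤ max e1max e3max →
      (s' = e3 ∨
       (e1 - s < -e2 ∧ s' = s - e2) ∨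
       (e1 - s > e2 ∧ s' = s + e2) ∨
       (-e2 ≤ e1 - s ∧ e1 - s ≤ e2 ∧ s' = e1)) →
      min e1min e3min ≤ s' ∧ s' ≤ max e1max e3max :=
  stmt_11_general e1min e1max e2min e2max e3min e3max h2pos
end
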